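/- Let f : ℕ → ℂ be an arithmetic function and suppose there exist constants C > 0 and α ∈ (0,1) such that |S(x,t)| ≤ C·x^α for all real x ≥ 1 and all t ∈ ℝ. Then the Hausdorff dimension of the image F([0,1]) = {F(t) : t ∈ [0,1]} ⊂ ℂ is at most 1/(1−α). -/

import Mathlib

/-!
By partial summation, `‖S(x,t)‖ ≤ C x^α` makes the `N`-th partial sum `P_N` of the Fourier
series `C' N^(α-1)`-close to `F` uniformly in `t`, while `P_N' = 2πi S(N,·)` makes `P_N`
Lipschitz with constant `2πC N^α`. Comparing `F t` and `F s` through `P_N` with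
`N ≈ 1/|t - s|` shows that `F` is Hölder of exponent `1 - α` on `[0,1]`, and a Hölder map of
exponent `r` increases Hausdorff dimension by at most the factor `1/r`.
-/

open Filter Finset Topology MeasureTheory
open scoped ENNReal NNReal

theorem norm_setIntegral_Ioc_le_of_norm_le_rpow {E : Type*} [NormedAddCommGroup E]
    [NormedSpace ℝ E] {h : ℝ → E} {C β a b : ℝ} (hβ : β < -1) (ha : 0 < a) (hC : 0 ≤ C)
    (hh : ∀ t ∈ Set.Ioc a b, ‖h t‖ ≤ C * t ^ β) :
    ‖∫ t in Set.Ioc a b, h t‖ ≤ C * (a ^ (β + 1) / -(β + 1)) := by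
  have hint : IntegrableOn (fun t : ℝ ↦ C * t ^ β) (Set.Ioi a) :=
    (integrableOn_Ioi_rpow_of_lt hβ ha).const_mul C
  calc ‖∫ t in Set.Ioc a b, h t‖ ≤ ∫ t in Set.Ioc a b, C * t ^ β :=
        norm_integral_le_of_norm_le (hint.mono_set Set.Ioc_subset_Ioi_self)
          (ae_restrict_of_forall_mem measurableSet_Ioc hh)
    _ ≤ ∫ t in Set.Ioi a, C * t ^ β :=
        setIntegral_mono_set hint
          (ae_restrict_of_forall_mem measurableSet_Ioi fun t ht ↦
            mul_nonneg hC (Real.rpow_nonneg (ha.trans ht).le _))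
          Set.Ioc_subset_Ioi_self.eventuallyLE
    _ = C * (a ^ (β + 1) / -(β + 1)) := by
        rw [integral_const_mul, integral_Ioi_rpow_of_lt hβ ha, neg_div, div_neg]

theorem norm_ofReal_inv_pow_mul_le {C α x : ℝ} {z : ℂ} (k : ℕ) (hx : 0 < x)
    (hz : ‖z‖ ≤ C * x ^ α) : ‖(((x ^ k)⁻¹ : ℝ) : ℂ) * z‖ ≤ C * x ^ (α - k) := by
  rw [norm_mul, Complex.norm_real, Real.norm_of_nonneg (by positivity), Real.rpow_sub hx,
    Real.rpow_natCast]
  calc (x ^ k)⁻¹ * ‖z‖ ≤ (x ^ k)⁻¹ * (C * x ^ α) := by gcongr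
    _ = C * (x ^ α / x ^ k) := by ring

theorem sum_Icc_zero_ite_eq {M : Type*} [AddCommMonoid M] (c : ℕ → M) (N : ℕ) :
    ∑ k ∈ Icc 0 N, (if k = 0 then 0 else c k) = ∑ k ∈ Icc 1 N, c k := by
  rw [Icc_eq_cons_Ioc (Nat.zero_le N), sum_cons, if_pos rfl, zero_add, ← Icc_add_one_left_eq_Ioc]
  exact sum_congr rfl fun k hk ↦ if_neg (by simp at hk; omega)

theorem norm_sum_Ioc_div_le {c : ℕ → ℂ} {C α : ℝ} (hC : 0 ≤ C) (hα : α < 1)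
    (hc : ∀ x : ℝ, 1 ≤ x → ‖∑ k ∈ Icc 1 ⌊x⌋₊, c k‖ ≤ C * x ^ α) {n m : ℕ} (hn : 1 ≤ n)
    (hnm : n ≤ m) :
    ‖∑ k ∈ Ioc n m, c k / k‖ ≤ C * (2 + 1 / (1 - α)) * (n : ℝ) ^ (α - 1) := by
  -- Mathlib's Abel summation uses partial sums from index `0`, so the term at `0` is removed.
  set c₀ : ℕ → ℂ := fun k ↦ if k = 0 then 0 else c k
  set g : ℝ → ℂ := fun x ↦ ((x⁻¹ : ℝ) : ℂ)
  have hn₁ : (1 : ℝ) ≤ n := by exact_mod_cast hn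
  have hn₀ : (0 : ℝ) < n := by linarith
  have hpos : ∀ t ∈ Set.Icc (n : ℝ) m, 0 < t := fun t ht ↦ hn₀.trans_le ht.1
  have hg : ∀ t ∈ Set.Icc (n : ℝ) m, HasDerivAt g ((-(t ^ 2)⁻¹ : ℝ) : ℂ) t :=
    fun t ht ↦ (hasDerivAt_inv (hpos t ht).ne').ofReal_comp
  have hg' : IntegrableOn (deriv g) (Set.Icc (n : ℝ) m) := by
    refine ContinuousOn.integrableOn_Icc (ContinuousOn.congr ?_ fun t ht ↦ (hg t ht).deriv)
    exact Complex.continuous_ofReal.comp_continuousOn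
      ((continuousOn_id.pow 2).inv₀ fun t ht ↦ pow_ne_zero 2 (hpos t ht).ne').neg
  have habel :=
    sum_mul_eq_sub_sub_integral_mul' c₀ hnm (fun t ht ↦ (hg t ht).differentiableAt) hg'
  have hlhs : ∑ k ∈ Ioc n m, g k * c₀ k = ∑ k ∈ Ioc n m, c k / k := by
    refine sum_congr rfl fun k hk ↦ ?_
    simp only [g, c₀, if_neg (show k ≠ 0 by simp at hk; omega)]
    push_cast
    ring
  have hboundary : ∀ k : ℕ, n ≤ k → ‖g k * ∑ i ∈ Icc 0 k, c₀ i‖ ≤ C * (n : ℝ) ^ (α - 1) := by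
    intro k hk
    have hk' : (n : ℝ) ≤ k := by exact_mod_cast hk
    have := norm_ofReal_inv_pow_mul_le 1 (hn₀.trans_le hk')
      (by simpa using hc k (hn₁.trans hk'))
    rw [pow_one, Nat.cast_one, ← sum_Icc_zero_ite_eq] at this
    exact this.trans (mul_le_mul_of_nonneg_left
      (Real.rpow_le_rpow_of_nonpos hn₀ hk' (by linarith)) hC)
  have hintegral : ‖∫ t in Set.Ioc (n : ℝ) m, deriv g t * ∑ k ∈ Icc 0 ⌊t⌋₊, c₀ k‖
      ≤ C * ((n : ℝ) ^ (α - 1) / (1 - α)) := by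
    have := norm_setIntegral_Ioc_le_of_norm_le_rpow (b := m)
      (h := fun t ↦ deriv g t * ∑ k ∈ Icc 0 ⌊t⌋₊, c₀ k) (show α - 2 < -1 by linarith) hn₀ hC
      fun t ht ↦ by
        rw [(hg t (Set.Ioc_subset_Icc_self ht)).deriv, sum_Icc_zero_ite_eq, Complex.ofReal_neg,
          neg_mul, norm_neg]
        exact_mod_cast norm_ofReal_inv_pow_mul_le 2 (hn₀.trans ht.1) (hc t (hn₁.trans ht.1.le))
    rwa [show α - 2 + 1 = α - 1 by ring, show -(α - 1) = 1 - α by ring] at this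
  rw [← hlhs, habel]
  calc _ ≤ ‖g m * ∑ k ∈ Icc 0 m, c₀ k‖ + ‖g n * ∑ k ∈ Icc 0 n, c₀ k‖
        + ‖∫ t in Set.Ioc (n : ℝ) m, deriv g t * ∑ k ∈ Icc 0 ⌊t⌋₊, c₀ k‖ :=
        (norm_sub_le _ _).trans (add_le_add_left (norm_sub_le _ _) _)
    _ ≤ C * (n : ℝ) ^ (α - 1) + C * (n : ℝ) ^ (α - 1) + C * ((n : ℝ) ^ (α - 1) / (1 - α)) := by
        gcongr
        exacts [hboundary m hnm, hboundary n le_rfl]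
    _ = C * (2 + 1 / (1 - α)) * (n : ℝ) ^ (α - 1) := by ring

theorem norm_sub_le_rpow_of_approx {E : Type*} [SeminormedAddCommGroup E] {F : ℝ → E}
    {P : ℕ → ℝ → E} {A B α : ℝ} (hα₀ : 0 ≤ α) (hα₁ : α ≤ 1) (hA : 0 ≤ A) (hB : 0 ≤ B)
    (happrox : ∀ N : ℕ, 1 ≤ N → ∀ t, ‖F t - P N t‖ ≤ A * (N : ℝ) ^ (α - 1))
    (hlip : ∀ N : ℕ, 1 ≤ N → ∀ s t, ‖P N t - P N s‖ ≤ B * (N : ℝ) ^ α * |t - s|)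
    {s t : ℝ} (hst : |t - s| ≤ 1) :
    ‖F t - F s‖ ≤ (2 * A + 2 * B) * |t - s| ^ (1 - α) := by
  rcases eq_or_ne t s with rfl | hne
  · rw [sub_self, norm_zero]
    positivity
  set δ := |t - s|
  have hδ : 0 < δ := abs_pos.2 (sub_ne_zero.2 hne)
  have hδ₁ : 1 ≤ δ⁻¹ := one_le_inv_iff₀.2 ⟨hδ, hst⟩
  set N := ⌈δ⁻¹⌉₊
  have hN_ge : δ⁻¹ ≤ N := Nat.le_ceil _
  have hN_le : (N : ℝ) ≤ 2 * δ⁻¹ := by linarith [Nat.ceil_lt_add_one (inv_nonneg.2 hδ.le)]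
  have hN : 1 ≤ N := by exact_mod_cast hδ₁.trans hN_ge
  have happrox_le : (N : ℝ) ^ (α - 1) ≤ δ ^ (1 - α) := by
    calc (N : ℝ) ^ (α - 1) ≤ δ⁻¹ ^ (α - 1) :=
          Real.rpow_le_rpow_of_nonpos (by positivity) hN_ge (by linarith)
      _ = δ ^ (1 - α) := by rw [Real.inv_rpow hδ.le, ← Real.rpow_neg hδ.le, neg_sub]
  have hlip_le : (N : ℝ) ^ α * δ ≤ 2 * δ ^ (1 - α) := by
    calc (N : ℝ) ^ α * δ ≤ (2 * δ⁻¹) ^ α * δ := by gcongr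
      _ = 2 ^ α * δ ^ (1 - α) := by
        rw [Real.mul_rpow zero_le_two (by positivity), Real.inv_rpow hδ.le, Real.rpow_sub hδ,
          Real.rpow_one]
        field_simp
      _ ≤ 2 * δ ^ (1 - α) := by
        gcongr
        exact Real.rpow_le_self_of_one_le one_le_two hα₁
  calc ‖F t - F s‖ = ‖(F t - P N t) + (P N t - P N s) - (F s - P N s)‖ := by congr 1; abel
    _ ≤ ‖F t - P N t‖ + ‖P N t - P N s‖ + ‖F s - P N s‖ :=
        norm_sub_le_of_le (norm_add_le _ _) le_rfl
    _ ≤ A * (N : ℝ) ^ (α - 1) + B * (N : ℝ) ^ α * δ + A * (N : ℝ) ^ (α - 1) := by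
        gcongr
        exacts [happrox N hN t, hlip N hN s t, happrox N hN s]
    _ ≤ A * δ ^ (1 - α) + B * (2 * δ ^ (1 - α)) + A * δ ^ (1 - α) := by
        rw [mul_assoc B]
        gcongr
    _ = (2 * A + 2 * B) * δ ^ (1 - α) := by ring

theorem holderOnWith_of_dist_le {X Y : Type*} [PseudoMetricSpace X] [PseudoMetricSpace Y]
    {f : X → Y} {s : Set X} {C : ℝ≥0} {r : ℝ≥0}
    (h : ∀ x ∈ s, ∀ y ∈ s, dist (f x) (f y) ≤ C * dist x y ^ (r : ℝ)) :
    HolderOnWith C r f s := by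
  intro x hx y hy
  rw [edist_dist, edist_dist, ENNReal.ofReal_rpow_of_nonneg dist_nonneg r.coe_nonneg,
    ← ENNReal.ofReal_coe_nnreal, ← ENNReal.ofReal_mul C.coe_nonneg]
  exact ENNReal.ofReal_le_ofReal (h x hx y hy)

noncomputable def expSum (f : ℕ → ℂ) (N : ℕ) (t : ℝ) : ℂ :=
  ∑ n ∈ Icc 1 N, f n * Complex.exp (2 * Real.pi * Complex.I * (n : ℂ) * (t : ℂ))

noncomputable def fourierPartialSum (f : ℕ → ℂ) (N : ℕ) (t : ℝ) : ℂ :=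
  ∑ n ∈ Icc 1 N, f n * Complex.exp (2 * Real.pi * Complex.I * (n : ℂ) * (t : ℂ)) / (n : ℂ)

theorem hasDerivAt_fourierPartialSum (f : ℕ → ℂ) (N : ℕ) (t : ℝ) :
    HasDerivAt (fourierPartialSum f N) (2 * Real.pi * Complex.I * expSum f N t) t := by
  unfold fourierPartialSum expSum
  rw [mul_sum]
  refine HasDerivAt.fun_sum fun n hn ↦ ?_
  have hn₀ : (n : ℂ) ≠ 0 := Nat.cast_ne_zero.2 (by simp at hn; omega)
  refine (((((hasDerivAt_id' (t : ℂ)).const_mul (2 * Real.pi * Complex.I * (n : ℂ))).cexp.const_mul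
    (f n)).div_const (n : ℂ)).comp_ofReal).congr_deriv ?_
  field_simp

theorem norm_fourierPartialSum_sub_le {f : ℕ → ℂ} {N : ℕ} {B : ℝ}
    (hB : ∀ u, ‖expSum f N u‖ ≤ B) (s t : ℝ) :
    ‖fourierPartialSum f N t - fourierPartialSum f N s‖ ≤ 2 * Real.pi * B * |t - s| := by
  refine Convex.norm_image_sub_le_of_norm_hasDerivWithin_le
    (fun u _ ↦ (hasDerivAt_fourierPartialSum f N u).hasDerivWithinAt) (fun u _ ↦ ?_)
    convex_univ (Set.mem_univ s) (Set.mem_univ t)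
  have h2πI : ‖2 * (Real.pi : ℂ) * Complex.I‖ = 2 * Real.pi := by
    simp [abs_of_pos Real.pi_pos]
  rw [norm_mul, h2πI]
  exact mul_le_mul_of_nonneg_left (hB u) Real.two_pi_pos.le

theorem fourierPartialSum_sub_eq (f : ℕ → ℂ) {N M : ℕ} (h : N ≤ M) (t : ℝ) :
    fourierPartialSum f M t - fourierPartialSum f N t =
      ∑ n ∈ Ioc N M, f n * Complex.exp (2 * Real.pi * Complex.I * (n : ℂ) * (t : ℂ)) / (n : ℂ) := by
  have hIcc : ∀ K : ℕ, Icc 1 K = Ioc 0 K := Icc_add_one_left_eq_Ioc 0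
  rw [fourierPartialSum, fourierPartialSum, hIcc, hIcc,
    ← sum_Ioc_consecutive _ (Nat.zero_le N) h, add_sub_cancel_left]

theorem norm_sub_fourierPartialSum_le {f : ℕ → ℂ} {F : ℝ → ℂ} {C α : ℝ} (hC : 0 ≤ C)
    (hα : α < 1)
    (hS : ∀ x : ℝ, 1 ≤ x → ∀ t : ℝ, ‖expSum f ⌊x⌋₊ t‖ ≤ C * x ^ α)
    {t : ℝ} (hF : Tendsto (fun M ↦ fourierPartialSum f M t) atTop (𝓝 (F t)))
    {N : ℕ} (hN : 1 ≤ N) :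
    ‖F t - fourierPartialSum f N t‖ ≤ C * (2 + 1 / (1 - α)) * (N : ℝ) ^ (α - 1) := by
  refine le_of_tendsto (hF.sub_const _).norm (eventually_atTop.2 ⟨N, fun M hM ↦ ?_⟩)
  rw [fourierPartialSum_sub_eq f hM]
  exact norm_sum_Ioc_div_le hC hα (fun x hx ↦ hS x hx t) hN hM

/-- Under the uniform exponential sum bound `|S(x,t)| ≤ C x^α`, the Hausdorff
dimension of the image `F([0,1]) ⊂ ℂ` is at most `1/(1−α)`. -/
theorem stmt_5 (f : ℕ → ℂ) (C α : ℝ) (hC : 0 < C) (hα0 : 0 < α) (hα1 : α < 1)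
    (hS : ∀ x : ℝ, 1 ≤ x → ∀ t : ℝ,
      ‖∑ n ∈ Finset.Icc 1 ⌊x⌋₊,
        f n * Complex.exp (2 * Real.pi * Complex.I * (n : ℂ) * (t : ℂ))‖ ≤ C * x ^ α)
    (F : ℝ → ℂ)
    (hF : ∀ t : ℝ, Tendsto (fun N : ℕ => ∑ n ∈ Finset.Icc 1 N,
        f n * Complex.exp (2 * Real.pi * Complex.I * (n : ℂ) * (t : ℂ)) / (n : ℂ))
      atTop (𝓝 (F t))) :
    dimH (F '' Set.Icc (0 : ℝ) 1) ≤ ENNReal.ofReal (1 / (1 - α)) := by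
  have h1α : 0 < 1 - α := by linarith
  have hlip : ∀ N : ℕ, 1 ≤ N → ∀ s t, ‖fourierPartialSum f N t - fourierPartialSum f N s‖
      ≤ 2 * Real.pi * C * (N : ℝ) ^ α * |t - s| := fun N hN s t ↦ by
    rw [mul_assoc _ C]
    exact norm_fourierPartialSum_sub_le
      (fun u ↦ by simpa [expSum] using hS N (by exact_mod_cast hN) u) s t
  set A := C * (2 + 1 / (1 - α))
  have hholder : HolderOnWith (2 * A + 2 * (2 * Real.pi * C)).toNNReal (1 - α).toNNReal F
      (Set.Icc 0 1) := by
    refine holderOnWith_of_dist_le fun t ht s hs ↦ ?_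
    rw [Real.coe_toNNReal _ h1α.le, Real.coe_toNNReal _ (by positivity), dist_eq_norm,
      Real.dist_eq]
    exact norm_sub_le_rpow_of_approx hα0.le hα1.le (by positivity) (by positivity)
      (fun N hN t ↦ norm_sub_fourierPartialSum_le hC.le hα1 hS (hF t) hN) hlip
      (abs_sub_le_iff.2 ⟨by linarith [ht.2, hs.1], by linarith [ht.1, hs.2]⟩)
  calc dimH (F '' Set.Icc 0 1) ≤ dimH (Set.Icc (0 : ℝ) 1) / ((1 - α).toNNReal : ℝ≥0∞) :=
        hholder.dimH_image_le (Real.toNNReal_pos.2 h1α)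
    _ ≤ 1 / ((1 - α).toNNReal : ℝ≥0∞) := by
        gcongr
        exact (dimH_mono (Set.subset_univ _)).trans_eq Real.dimH_univ
    _ = ENNReal.ofReal (1 / (1 - α)) := by
        rw [ENNReal.ofReal_div_of_pos h1α, ENNReal.ofReal_one]
        rfl
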